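/- There exist constants C > 0 and 0 < α < 1 such that, for the right action of the first Grigorchuk group G on the G-orbit of the boundary point ρ = 1^∞ with generating set S = {a, b, c, d}, the inverted orbit growth function satisfies Δ_ρ^S(n) ≤ C n^α and the number of distinct inverted orbits satisfies N_ρ^S(n) ≤ exp(C n^α) for every n ∈ ℕ. -/

import Mathlib

noncomputable section

/-! ### The Grigorchuk generators -/

namespace Grig

def aFun : List Bool → List Bool
  | [] => []
  | x :: w => (!x) :: w

mutual
  def bFun : List Bool → List Bool
    | [] => []
    | false :: w => false :: aFun w
    | true :: w => true :: cFun w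
  def cFun : List Bool → List Bool
    | [] => []
    | false :: w => false :: aFun w
    | true :: w => true :: dFun w
  def dFun : List Bool → List Bool
    | [] => []
    | false :: w => false :: w
    | true :: w => true :: bFun w
end

theorem aFun_involutive : Function.Involutive aFun := by
  intro w
  match w with
  | [] => rfl
  | x :: w => simp [aFun]

theorem bcd_involutive :
    ∀ w : List Bool, bFun (bFun w) = w ∧ cFun (cFun w) = w ∧ dFun (dFun w) = w := by
  intro w
  induction w with
  | nil => exact ⟨rfl, rfl, rfl⟩
  | cons x w ih =>
    rcases x with _ | _
    · simp [bFun, cFun, dFun, aFun_involutive w]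
    · simp [bFun, cFun, dFun, ih.1, ih.2.1, ih.2.2]

theorem bFun_involutive : Function.Involutive bFun := fun w => (bcd_involutive w).1
theorem cFun_involutive : Function.Involutive cFun := fun w => (bcd_involutive w).2.1
theorem dFun_involutive : Function.Involutive dFun := fun w => (bcd_involutive w).2.2

theorem aFun_length : ∀ w : List Bool, (aFun w).length = w.length := by
  intro w
  match w with
  | [] => rfl
  | x :: w => simp [aFun]

theorem bcd_length : ∀ w : List Bool,
    (bFun w).length = w.length ∧ (cFun w).length = w.length ∧ (dFun w).length = w.length := by
  intro w
  induction w with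
  | nil => exact ⟨rfl, rfl, rfl⟩
  | cons x w ih =>
    rcases x with _ | _
    · simp [bFun, cFun, dFun, aFun_length w]
    · simp [bFun, cFun, dFun, ih.1, ih.2.1, ih.2.2]

theorem bFun_length : ∀ w, (bFun w).length = w.length := fun w => (bcd_length w).1
theorem cFun_length : ∀ w, (cFun w).length = w.length := fun w => (bcd_length w).2.1
theorem dFun_length : ∀ w, (dFun w).length = w.length := fun w => (bcd_length w).2.2

/-- The generators of the first Grigorchuk group as permutations of the vertex set
`{0,1}*` of the rooted binary tree. -/
def aPerm : Equiv.Perm (List Bool) := aFun_involutive.toPerm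
def bPerm : Equiv.Perm (List Bool) := bFun_involutive.toPerm
def cPerm : Equiv.Perm (List Bool) := cFun_involutive.toPerm
def dPerm : Equiv.Perm (List Bool) := dFun_involutive.toPerm

/-- The generating set `S = {a, b, c, d}` (a set of involutions). -/
def Sset : Set (Equiv.Perm (List Bool)) := {aPerm, bPerm, cPerm, dPerm}

/-- The first Grigorchuk group. -/
def Grigorchuk : Subgroup (Equiv.Perm (List Bool)) := Subgroup.closure Sset

/-- Word length with respect to `S = {a, b, c, d}`. -/
def wordLength (g : Equiv.Perm (List Bool)) : ℕ :=
  sInf {k | ∃ l : List (Equiv.Perm (List Bool)),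
    (∀ x ∈ l, x ∈ Sset) ∧ l.length = k ∧ l.prod = g}

/-- The growth function of the first Grigorchuk group with respect to `S`. -/
def growthGrig (m : ℕ) : ℕ :=
  Nat.card {g : Equiv.Perm (List Bool) |
    ∃ l : List (Equiv.Perm (List Bool)), (∀ x ∈ l, x ∈ Sset) ∧ l.length ≤ m ∧ l.prod = g}

/-! ### Level transfer -/

def levelFun (n : ℕ) (f : List Bool → List Bool) (v : Fin n → Bool) : Fin n → Bool :=
  fun i => (f (List.ofFn v)).getD i false

theorem levelFun_involutive (n : ℕ) (f : List Bool → List Bool)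
    (hlen : ∀ l, (f l).length = l.length) (hinv : Function.Involutive f) :
    Function.Involutive (levelFun n f) := by
  intro v
  have key : ∀ u : Fin n → Bool, List.ofFn (levelFun n f u) = f (List.ofFn u) := by
    intro u
    apply List.ext_getElem
    · simp [hlen]
    · intro i h1 h2
      simp only [List.getElem_ofFn]
      simp [levelFun, List.getD_eq_getElem, h2]
  funext i
  simp only [levelFun, key v, hinv (List.ofFn v)]
  simp [List.getD_eq_getElem]

/-- The images `a_n, b_n, c_n, d_n` of the Grigorchuk generators in `Sym(X_n)`,
where the `n`-th level `X_n = {0,1}^n` is identified with `Fin n → Bool`. -/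
def aLev (n : ℕ) : Equiv.Perm (Fin n → Bool) :=
  (levelFun_involutive n aFun aFun_length aFun_involutive).toPerm
def bLev (n : ℕ) : Equiv.Perm (Fin n → Bool) :=
  (levelFun_involutive n bFun bFun_length bFun_involutive).toPerm
def cLev (n : ℕ) : Equiv.Perm (Fin n → Bool) :=
  (levelFun_involutive n cFun cFun_length cFun_involutive).toPerm
def dLev (n : ℕ) : Equiv.Perm (Fin n → Bool) :=
  (levelFun_involutive n dFun dFun_length dFun_involutive).toPerm

end Grig

/-! ### The boundary action and actions of words -/

/-- The (continuous extension to the boundary `∂T = {0,1}^ℕ` of the) action of a tree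
automorphism on the boundary of the rooted binary tree. -/
def boundaryAct (g : Equiv.Perm (List Bool)) (ξ : ℕ → Bool) : ℕ → Bool :=
  fun n => (g (List.ofFn fun i : Fin (n + 1) => ξ i)).getD n false

/-- Applying a word of generators to a vertex, letter by letter: the right action of the
word `l` (the generators in `S` are involutions). -/
def wordApply (l : List (Equiv.Perm (List Bool))) (v : List Bool) : List Bool :=
  l.foldl (fun v s => s v) v

/-- The right action of a word on a boundary point. -/
def wordApplyB (l : List (Equiv.Perm (List Bool))) (ξ : ℕ → Bool) : ℕ → Bool :=
  l.foldl (fun ξ s => boundaryAct s ξ) ξ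

/-- The boundary point `ρ = 1^∞`. -/
def rhoInf : ℕ → Bool := fun _ => true

/-- The vertex `ρ_n = 1^n` of the `n`-th level. -/
def rhoVertex (n : ℕ) : List Bool := List.replicate n true

/-- The vertex `η_n = 1^{n-1}0` of the `n`-th level. -/
def etaVertex (n : ℕ) : List Bool := List.replicate (n - 1) true ++ [false]
/-! ### Inverted orbits of the Grigorchuk group on the orbit of `ρ = 1^∞` -/

/-- The inverted orbit `O_ξ(l) = {ξ, ξ·s_ℓ, ξ·s_{ℓ-1}s_ℓ, …, ξ·s_1⋯s_ℓ}` of the word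
`l = s_1 ⋯ s_ℓ` at the boundary point `ξ`. -/
def invOrbitB (l : List (Equiv.Perm (List Bool))) (ξ : ℕ → Bool) : Set (ℕ → Bool) :=
  {x | ∃ i : ℕ, x = wordApplyB (l.drop i) ξ}

/-- The inverted orbit growth function `Δ_ρ^S` of the Grigorchuk group acting on the
orbit of `ρ = 1^∞`. -/
noncomputable def DeltaB (m : ℕ) : ℕ :=
  sSup {k | ∃ l : List (Equiv.Perm (List Bool)),
    (∀ x ∈ l, x ∈ Grig.Sset) ∧ l.length ≤ m ∧ k = Nat.card (invOrbitB l rhoInf)}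

/-- The number `N_ρ^S(m)` of distinct inverted orbits of words of length at most `m`. -/
noncomputable def NorbB (m : ℕ) : ℕ :=
  Nat.card {O : Set (ℕ → Bool) | ∃ l : List (Equiv.Perm (List Bool)),
    (∀ x ∈ l, x ∈ Grig.Sset) ∧ l.length ≤ m ∧ O = invOrbitB l rhoInf}

/-!
Write the Klein group `{1, b, c, d}` as `b^β c^γ` and add a marker bit that acts trivially:
inserting markers into a word records any subset of its inverted orbit, so `2^{Δ(m)}` and
`N(m)` are at most the number `M(t)` of (marked set, action) pairs realised by words of weight
`t ≈ 91 m`. Every word can be reduced to a normal form `κ₀ a κ₁ ⋯ a κₙ` without increasing its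
weight, and the pair of a word is determined by a root bit and the pairs of its two sections.
With weights `a = 70, b = 90, c = 66, d = 46` the sections of a normal form of weight `t` have
total weight at most `J = (6t + 420)/7`, whence `M(t) ≤ ∑_{j ≤ J} 2 M(j) M(J - j)`. Since
`2^{1/10} (6/7)^{9/10} < 1`, concavity of `x ↦ x^{9/10}` turns this recursion into
`log M(t) = O(t^{9/10})`.
-/

lemma rpow_add_rpow_le_two_rpow_mul {p a b : ℝ} (hp₀ : 0 ≤ p) (hp₁ : p ≤ 1) (ha : 0 ≤ a)
    (hb : 0 ≤ b) : a ^ p + b ^ p ≤ 2 ^ (1 - p) * (a + b) ^ p := by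
  have h := (Real.concaveOn_rpow hp₀ hp₁).2 (Set.mem_Ici.2 ha) (Set.mem_Ici.2 hb)
    (by norm_num : (0 : ℝ) ≤ 1 / 2) (by norm_num : (0 : ℝ) ≤ 1 / 2) (by norm_num)
  have h2p : 0 < (2 : ℝ) ^ p := by positivity
  simp only [smul_eq_mul] at h
  rw [← mul_add, ← mul_add, Real.mul_rpow (by norm_num) (by positivity),
    Real.div_rpow zero_le_one zero_le_two, Real.one_rpow, one_div_mul_eq_div, one_div_mul_eq_div,
    div_le_div_iff₀ two_pos h2p] at h
  rw [Real.rpow_sub zero_lt_two, Real.rpow_one, div_mul_eq_mul_div, le_div_iff₀ h2p]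
  linarith

lemma two_rpow_mul_seven_eighths_rpow_le :
    (2 : ℝ) ^ (1 / 10 : ℝ) * (7 / 8 : ℝ) ^ (9 / 10 : ℝ) ≤ 29 / 30 := by
  refine (pow_le_pow_iff_left₀ (by positivity) (by norm_num) (by norm_num : (10 : ℕ) ≠ 0)).1 ?_
  rw [mul_pow, ← Real.rpow_natCast, ← Real.rpow_natCast, ← Real.rpow_mul zero_le_two,
    ← Real.rpow_mul (by norm_num)]
  norm_num

lemma add_one_rpow_add_add_one_rpow_le {t j J : ℕ} (ht : 3500 ≤ t) (hJ : J ≤ (6 * t + 420) / 7)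
    (hj : j ≤ J) :
    ((j : ℝ) + 1) ^ (9 / 10 : ℝ) + (((J - j : ℕ) : ℝ) + 1) ^ (9 / 10 : ℝ) ≤
      29 / 30 * ((t : ℝ) + 1) ^ (9 / 10 : ℝ) := by
  have hJt : (J : ℝ) + 2 ≤ 7 / 8 * ((t : ℝ) + 1) := by
    have h : 8 * (J + 2) ≤ 7 * (t + 1) := by omega
    have h' : 8 * ((J : ℝ) + 2) ≤ 7 * ((t : ℝ) + 1) := by exact_mod_cast h
    linarith
  calc ((j : ℝ) + 1) ^ (9 / 10 : ℝ) + (((J - j : ℕ) : ℝ) + 1) ^ (9 / 10 : ℝ)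
      ≤ 2 ^ (1 / 10 : ℝ) * ((J : ℝ) + 2) ^ (9 / 10 : ℝ) := by
        have h := rpow_add_rpow_le_two_rpow_mul (p := 9 / 10) (by norm_num) (by norm_num)
          (by positivity : (0 : ℝ) ≤ (j : ℝ) + 1) (by positivity : (0 : ℝ) ≤ ((J - j : ℕ) : ℝ) + 1)
        rw [Nat.cast_sub hj] at h ⊢
        convert h using 3 <;> ring
    _ ≤ 2 ^ (1 / 10 : ℝ) * (7 / 8 * ((t : ℝ) + 1)) ^ (9 / 10 : ℝ) := by gcongr
    _ ≤ 29 / 30 * ((t : ℝ) + 1) ^ (9 / 10 : ℝ) := by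
        rw [Real.mul_rpow (by norm_num) (by positivity), ← mul_assoc]
        gcongr
        exact two_rpow_mul_seven_eighths_rpow_le

lemma log_two_mul_le_three_mul_rpow {x : ℝ} (hx : 1 ≤ x) :
    Real.log (2 * x) ≤ 3 * x ^ (9 / 10 : ℝ) := by
  have h1 : 1 ≤ x ^ (9 / 10 : ℝ) := Real.one_le_rpow hx (by norm_num)
  have hlog : Real.log x ≤ x ^ (9 / 10 : ℝ) / (9 / 10) :=
    Real.log_le_rpow_div (by linarith) (by norm_num)
  rw [Real.log_mul two_ne_zero (by linarith)]
  linarith [Real.log_two_lt_d9]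

lemma mul_le_exp_of_le_exp {M : ℕ → ℕ} {C : ℝ} (hC : 0 ≤ C) {t j J : ℕ} (ht : 3500 ≤ t)
    (hJ : J ≤ (6 * t + 420) / 7) (hj : j ≤ J)
    (ih : ∀ i < t, (M i : ℝ) ≤ Real.exp (C * ((i : ℝ) + 1) ^ (9 / 10 : ℝ))) :
    (M j : ℝ) * M (J - j) ≤ Real.exp (29 / 30 * C * ((t : ℝ) + 1) ^ (9 / 10 : ℝ)) := by
  have hsplit := add_one_rpow_add_add_one_rpow_le ht hJ hj
  calc (M j : ℝ) * M (J - j)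
      ≤ Real.exp (C * ((j : ℝ) + 1) ^ (9 / 10 : ℝ)) *
          Real.exp (C * (((J - j : ℕ) : ℝ) + 1) ^ (9 / 10 : ℝ)) :=
        mul_le_mul (ih j (by omega)) (ih (J - j) (by omega)) (by positivity) (by positivity)
    _ ≤ Real.exp (29 / 30 * C * ((t : ℝ) + 1) ^ (9 / 10 : ℝ)) := by
        rw [← Real.exp_add, ← mul_add]
        exact Real.exp_le_exp.2 (by nlinarith)

lemma le_exp_rpow_of_le_sum_step {M : ℕ → ℕ} {C : ℝ} (hC : 90 ≤ C) {t : ℕ} (ht : 3500 ≤ t)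
    (hM : M t ≤ ∑ j ∈ Finset.range ((6 * t + 420) / 7 + 1),
      2 * (M j * M ((6 * t + 420) / 7 - j)))
    (ih : ∀ j < t, (M j : ℝ) ≤ Real.exp (C * ((j : ℝ) + 1) ^ (9 / 10 : ℝ))) :
    (M t : ℝ) ≤ Real.exp (C * ((t : ℝ) + 1) ^ (9 / 10 : ℝ)) := by
  set J := (6 * t + 420) / 7
  set g : ℝ := ((t : ℝ) + 1) ^ (9 / 10 : ℝ)
  have hterm : ∀ j ∈ Finset.range (J + 1),
      ((2 * (M j * M (J - j)) : ℕ) : ℝ) ≤ 2 * Real.exp (29 / 30 * C * g) := fun j hj => by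
    push_cast
    exact mul_le_mul_of_nonneg_left (mul_le_exp_of_le_exp (by linarith) ht le_rfl
      (Nat.lt_succ_iff.1 (Finset.mem_range.1 hj)) ih) zero_le_two
  have hJt : (J : ℝ) + 1 ≤ t + 1 := by exact_mod_cast (by omega : J + 1 ≤ t + 1)
  have hlog : Real.log (2 * ((t : ℝ) + 1)) ≤ C / 30 * g :=
    (log_two_mul_le_three_mul_rpow (by linarith [t.cast_nonneg (α := ℝ)])).trans
      (by gcongr; linarith)
  calc (M t : ℝ)
      ≤ ∑ j ∈ Finset.range (J + 1), ((2 * (M j * M (J - j)) : ℕ) : ℝ) := by exact_mod_cast hM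
    _ ≤ (J + 1) * (2 * Real.exp (29 / 30 * C * g)) := by simpa using Finset.sum_le_sum hterm
    _ ≤ 2 * ((t : ℝ) + 1) * Real.exp (29 / 30 * C * g) := by
        nlinarith [Real.exp_pos (29 / 30 * C * g)]
    _ ≤ Real.exp (C * g) := by
        rw [← Real.exp_log (by positivity : (0 : ℝ) < 2 * ((t : ℝ) + 1)), ← Real.exp_add]
        exact Real.exp_le_exp.2 (by linarith)

theorem exists_le_exp_rpow_of_le_sum (M : ℕ → ℕ)
    (hM : ∀ t, M t ≤ ∑ j ∈ Finset.range ((6 * t + 420) / 7 + 1),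
      2 * (M j * M ((6 * t + 420) / 7 - j))) :
    ∃ C : ℝ, 0 < C ∧ ∀ t, (M t : ℝ) ≤ Real.exp (C * ((t : ℝ) + 1) ^ (9 / 10 : ℝ)) := by
  set C : ℝ := 90 + ∑ t ∈ Finset.range 3500, (M t : ℝ)
  have hC : 90 ≤ C := le_add_of_nonneg_right (by positivity)
  refine ⟨C, by linarith, fun t => ?_⟩
  induction t using Nat.strong_induction_on with
  | _ t ih =>
  rcases lt_or_ge t 3500 with ht | ht
  · have hg : 1 ≤ ((t : ℝ) + 1) ^ (9 / 10 : ℝ) :=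
      Real.one_le_rpow (by linarith [t.cast_nonneg (α := ℝ)]) (by norm_num)
    have hMt : (M t : ℝ) ≤ C := by
      have := Finset.single_le_sum (fun i _ => (M i).cast_nonneg (α := ℝ)) (Finset.mem_range.2 ht)
      linarith
    calc (M t : ℝ) ≤ C * ((t : ℝ) + 1) ^ (9 / 10 : ℝ) :=
          hMt.trans (le_mul_of_one_le_right (by linarith) hg)
      _ ≤ _ := (le_add_of_nonneg_right zero_le_one).trans (Real.add_one_le_exp _)
  · exact le_exp_rpow_of_le_sum_step hC ht (hM t) ih

lemma cast_add_one_rpow_le {m : ℕ} (hm : 1 ≤ m) :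
    (((91 * m + 1 : ℕ) : ℝ) + 1) ^ (9 / 10 : ℝ) ≤ 93 * (m : ℝ) ^ (9 / 10 : ℝ) := by
  have hm' : (1 : ℝ) ≤ m := by exact_mod_cast hm
  calc (((91 * m + 1 : ℕ) : ℝ) + 1) ^ (9 / 10 : ℝ) ≤ (93 * (m : ℝ)) ^ (9 / 10 : ℝ) := by
        gcongr
        push_cast
        linarith
    _ = (93 : ℝ) ^ (9 / 10 : ℝ) * (m : ℝ) ^ (9 / 10 : ℝ) :=
        Real.mul_rpow (by norm_num) (by positivity)
    _ ≤ 93 * (m : ℝ) ^ (9 / 10 : ℝ) := by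
        gcongr
        exact Real.rpow_le_self_of_one_le (by norm_num) (by norm_num)

lemma le_two_mul_of_two_pow_le_exp {k : ℕ} {x : ℝ} (h : (2 : ℝ) ^ k ≤ Real.exp x) :
    (k : ℝ) ≤ 2 * x := by
  have hlog := Real.log_le_log (by positivity) h
  rw [Real.log_pow, Real.log_exp] at hlog
  nlinarith [Real.log_two_gt_d9, k.cast_nonneg (α := ℝ)]

namespace Grig

abbrev Boundary := Stream' Bool

section Dynamics

open Stream'

lemma ofFn_succ_eq_cons (ξ : Boundary) (n : ℕ) :
    List.ofFn (fun i : Fin (n + 1) => ξ i) = ξ.head :: List.ofFn (fun i : Fin n => ξ.tail i) :=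
  List.ofFn_succ

lemma boundaryAct_refl (ξ : Boundary) : boundaryAct (Equiv.refl _) ξ = ξ := by
  funext n
  simp only [boundaryAct]
  rw [Equiv.refl_apply, List.getD_eq_getElem _ _ (by simp), List.getElem_ofFn]

lemma boundaryAct_cons {g g' : Equiv.Perm (List Bool)} {x y : Bool}
    (h : ∀ w, g (x :: w) = y :: g' w) (τ : Boundary) :
    boundaryAct g (x :: τ) = y :: boundaryAct g' τ := by
  funext n
  simp only [boundaryAct]
  rw [ofFn_succ_eq_cons, head_cons, tail_cons, h]
  cases n <;> rfl

def aAct : Boundary → Boundary := boundaryAct aPerm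
def bAct : Boundary → Boundary := boundaryAct bPerm
def cAct : Boundary → Boundary := boundaryAct cPerm
def dAct : Boundary → Boundary := boundaryAct dPerm

lemma aAct_cons (x : Bool) (τ : Boundary) : aAct (x :: τ) = (!x) :: τ := by
  rw [aAct, boundaryAct_cons (g' := Equiv.refl _) (fun _ => rfl), boundaryAct_refl]

lemma bAct_cons (x : Bool) (τ : Boundary) : bAct (x :: τ) = x :: cond x (cAct τ) (aAct τ) := by
  cases x
  · exact boundaryAct_cons (g' := aPerm) (fun _ => rfl) τ
  · exact boundaryAct_cons (g' := cPerm) (fun _ => rfl) τ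

lemma cAct_cons (x : Bool) (τ : Boundary) : cAct (x :: τ) = x :: cond x (dAct τ) (aAct τ) := by
  cases x
  · exact boundaryAct_cons (g' := aPerm) (fun _ => rfl) τ
  · exact boundaryAct_cons (g' := dPerm) (fun _ => rfl) τ

lemma dAct_cons (x : Bool) (τ : Boundary) : dAct (x :: τ) = x :: cond x (bAct τ) τ := by
  cases x
  · rw [dAct, boundaryAct_cons (g' := Equiv.refl _) (fun _ => rfl), boundaryAct_refl]; rfl
  · exact boundaryAct_cons (g' := bPerm) (fun _ => rfl) τ

lemma aAct_aAct (ξ : Boundary) : aAct (aAct ξ) = ξ := by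
  rw [← Stream'.eta ξ, aAct_cons, aAct_cons, Bool.not_not]

/-- Each relation at coordinate `n + 1` needs another one at coordinate `n`. -/
theorem get_bcd_relations (n : ℕ) : ∀ ξ : Boundary,
    (bAct (bAct ξ)).get n = ξ.get n ∧ (cAct (cAct ξ)).get n = ξ.get n ∧
    (dAct (dAct ξ)).get n = ξ.get n ∧
    (cAct (bAct ξ)).get n = (dAct ξ).get n ∧ (bAct (cAct ξ)).get n = (dAct ξ).get n ∧
    (dAct (cAct ξ)).get n = (bAct ξ).get n ∧ (cAct (dAct ξ)).get n = (bAct ξ).get n ∧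
    (bAct (dAct ξ)).get n = (cAct ξ).get n ∧ (dAct (bAct ξ)).get n = (cAct ξ).get n := by
  induction n with
  | zero =>
    intro ξ
    obtain ⟨x, τ, rfl⟩ : ∃ (x : Bool) (τ : Boundary), ξ = x :: τ := ⟨_, _, (Stream'.eta ξ).symm⟩
    simp [bAct_cons, cAct_cons, dAct_cons]
  | succ n ih =>
    intro ξ
    obtain ⟨x, τ, rfl⟩ : ∃ (x : Bool) (τ : Boundary), ξ = x :: τ := ⟨_, _, (Stream'.eta ξ).symm⟩
    cases x
    · simp [bAct_cons, cAct_cons, dAct_cons, aAct_aAct, get_succ_cons]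
    · simp [bAct_cons, cAct_cons, dAct_cons, get_succ_cons, ih τ]

lemma bAct_bAct (ξ : Boundary) : bAct (bAct ξ) = ξ := Stream'.ext fun n => (get_bcd_relations n ξ).1
lemma cAct_cAct (ξ : Boundary) : cAct (cAct ξ) = ξ :=
  Stream'.ext fun n => (get_bcd_relations n ξ).2.1
lemma cAct_bAct (ξ : Boundary) : cAct (bAct ξ) = dAct ξ :=
  Stream'.ext fun n => (get_bcd_relations n ξ).2.2.2.1
lemma bAct_cAct (ξ : Boundary) : bAct (cAct ξ) = dAct ξ :=
  Stream'.ext fun n => (get_bcd_relations n ξ).2.2.2.2.1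
lemma cAct_dAct (ξ : Boundary) : cAct (dAct ξ) = bAct ξ :=
  Stream'.ext fun n => (get_bcd_relations n ξ).2.2.2.2.2.2.1

abbrev rho : Boundary := rhoInf

lemma rho_eq_cons : rho = true :: rho :=
  Stream'.ext fun n => by cases n <;> rfl

lemma get_bcd_rho (n : ℕ) :
    (bAct rho).get n = true ∧ (cAct rho).get n = true ∧ (dAct rho).get n = true := by
  induction n with
  | zero => rw [rho_eq_cons, bAct_cons, cAct_cons, dAct_cons]; exact ⟨rfl, rfl, rfl⟩
  | succ n ih =>
    rw [rho_eq_cons, bAct_cons, cAct_cons, dAct_cons]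
    exact ⟨ih.2.1, ih.2.2, ih.1⟩

lemma bAct_rho : bAct rho = rho := Stream'.ext fun n => (get_bcd_rho n).1
lemma cAct_rho : cAct rho = rho := Stream'.ext fun n => (get_bcd_rho n).2.1

/-- `(β, γ, μ)` stands for the letter `b^β c^γ` carrying a marker bit `μ`; markers do not act. -/
abbrev KleinMark := Bool × Bool × Bool

namespace KleinMark

def one : KleinMark := (false, false, false)

def mul (κ κ' : KleinMark) : KleinMark := (xor κ.1 κ'.1, xor κ.2.1 κ'.2.1, xor κ.2.2 κ'.2.2)

def act (κ : KleinMark) (ξ : Boundary) : Boundary := cond κ.1 bAct id (cond κ.2.1 cAct id ξ)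

/-- Since `b = (a, c)`, `c = (a, d)` and `d = bc`, the section of `b^β c^γ` at `1` is
`c^β d^γ = b^γ c^{β+γ}`. -/
def sec1 (κ : KleinMark) : KleinMark := (κ.2.1, xor κ.1 κ.2.1, κ.2.2)

/-- The section of `b^β c^γ` at `0` is `a^{β+γ}`. -/
def sec0IsA (κ : KleinMark) : Bool := xor κ.1 κ.2.1

/-- Chosen, with weight `70` for `a`, so that passing to sections contracts weights by `6/7`
(`KleinMark.seven_mul_secWeight_le`). -/
def weight : KleinMark → ℕ
  | (false, false, μ) => μ.toNat
  | (true, false, μ) => 90 + μ.toNat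
  | (false, true, μ) => 66 + μ.toNat
  | (true, true, μ) => 46 + μ.toNat

lemma act_act (κ κ' : KleinMark) (ξ : Boundary) : κ'.act (κ.act ξ) = (κ.mul κ').act ξ := by
  obtain ⟨β, γ, μ⟩ := κ
  obtain ⟨β', γ', μ'⟩ := κ'
  cases β <;> cases γ <;> cases β' <;> cases γ' <;>
    simp [act, mul, bAct_bAct, cAct_cAct, cAct_bAct, ← bAct_cAct]

lemma act_cons (κ : KleinMark) (x : Bool) (τ : Boundary) :
    κ.act (x :: τ) = x :: cond x (κ.sec1.act τ) (cond κ.sec0IsA (aAct τ) τ) := by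
  obtain ⟨β, γ, μ⟩ := κ
  cases β <;> cases γ <;> cases x <;>
    simp [act, sec1, sec0IsA, bAct_cons, cAct_cons, aAct_aAct, bAct_cAct, cAct_dAct]

lemma act_rho (κ : KleinMark) : κ.act rho = rho := by
  obtain ⟨β, γ, μ⟩ := κ
  cases β <;> cases γ <;> simp [act, bAct_rho, cAct_rho]

lemma weight_mul_le (κ κ' : KleinMark) : (κ.mul κ').weight ≤ κ.weight + κ'.weight := by
  revert κ κ'
  decide

end KleinMark

end Dynamics

/-- `none` is the generator `a`. -/
abbrev Letter := Option KleinMark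

namespace Letter

def act : Letter → Boundary → Boundary
  | none => aAct
  | some κ => κ.act

def weight : Letter → ℕ
  | none => 70
  | some κ => κ.weight

def isMark : Letter → Bool
  | none => false
  | some κ => κ.2.2

def mark : Letter := some (false, false, true)

end Letter

def wordWeight (w : List Letter) : ℕ := (w.map Letter.weight).sum

@[simp] lemma wordWeight_nil : wordWeight [] = 0 := rfl

@[simp] lemma wordWeight_cons (ℓ : Letter) (w : List Letter) :
    wordWeight (ℓ :: w) = ℓ.weight + wordWeight w := List.sum_cons

abbrev Marked := Set Boundary × (Boundary → Boundary)

def Marked.step (ℓ : Letter) (P : Marked) : Marked :=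
  (cond ℓ.isMark (symmDiff P.1 {P.2 rho}) P.1, P.2 ∘ ℓ.act)

/-- For `w = ℓ₁ ⋯ ℓₖ`, the action `ξ ↦ ξ·ℓ₁⋯ℓₖ` together with the points `ρ·ℓᵢ₊₁⋯ℓₖ` of the
inverted orbit at the marked letters `ℓᵢ`, counted modulo `2`. -/
def evalMarked (w : List Letter) : Marked := w.foldr Marked.step (∅, id)

@[simp] lemma evalMarked_nil : evalMarked [] = (∅, id) := rfl

@[simp] lemma evalMarked_cons (ℓ : Letter) (w : List Letter) :
    evalMarked (ℓ :: w) = (evalMarked w).step ℓ := rfl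

namespace Marked

lemma step_one (P : Marked) : P.step (some KleinMark.one) = P := rfl

lemma step_step_some (κ κ' : KleinMark) (P : Marked) :
    (P.step (some κ')).step (some κ) = P.step (some (κ.mul κ')) := by
  refine Prod.ext ?_ (funext fun ξ => congrArg P.2 (KleinMark.act_act κ κ' ξ))
  show cond κ.2.2 (symmDiff (cond κ'.2.2 (symmDiff P.1 {P.2 rho}) P.1) {P.2 (κ'.act rho)})
      (cond κ'.2.2 (symmDiff P.1 {P.2 rho}) P.1) =
    cond (xor κ.2.2 κ'.2.2) (symmDiff P.1 {P.2 rho}) P.1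
  rw [KleinMark.act_rho]
  cases κ.2.2 <;> cases κ'.2.2 <;> simp

lemma step_step_none (P : Marked) : (P.step none).step none = P := by
  simp only [step, Letter.act, Letter.isMark, cond_false, Function.comp_def, aAct_aAct]

end Marked

/-- The normal form `[κ₀, κ₁, …, κₙ]` stands for the word `κ₀ a κ₁ a ⋯ a κₙ`. -/
abbrev NormalForm := List KleinMark

namespace NormalForm

def toWord (s : NormalForm) : List Letter := (s.map some).intersperse none

@[simp] lemma toWord_nil : toWord [] = [] := rfl

@[simp] lemma toWord_singleton (κ : KleinMark) : toWord [κ] = [some κ] := rfl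

@[simp] lemma toWord_cons_cons (κ κ' : KleinMark) (s : NormalForm) :
    toWord (κ :: κ' :: s) = some κ :: none :: toWord (κ' :: s) := rfl

/-- The normal form of `ℓ w` from the normal form of `w`. -/
def push : Letter → NormalForm → NormalForm
  | some κ, [] => [κ]
  | some κ, κ₀ :: s => κ.mul κ₀ :: s
  | none, [] => [KleinMark.one, KleinMark.one]
  | none, [κ₀] => [KleinMark.one, κ₀]
  | none, κ₀ :: κ₁ :: s =>
    if κ₀ = KleinMark.one then κ₁ :: s else KleinMark.one :: κ₀ :: κ₁ :: s

lemma evalMarked_toWord_push (ℓ : Letter) (s : NormalForm) :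
    evalMarked (push ℓ s).toWord = (evalMarked s.toWord).step ℓ := by
  match ℓ, s with
  | some κ, [] => rfl
  | some κ, [κ₀] => simp [push, Marked.step_step_some]
  | some κ, κ₀ :: κ₁ :: s => simp [push, Marked.step_step_some]
  | none, [] => simp [push, Marked.step_one]
  | none, [κ₀] => simp [push, Marked.step_one]
  | none, κ₀ :: κ₁ :: s =>
    by_cases h : κ₀ = KleinMark.one
    · simp [push, h, Marked.step_one, Marked.step_step_none]
    · simp [push, h, Marked.step_one]

lemma wordWeight_toWord_push_le (ℓ : Letter) (s : NormalForm) :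
    wordWeight (push ℓ s).toWord ≤ ℓ.weight + wordWeight s.toWord := by
  have hmul := KleinMark.weight_mul_le
  have hone : KleinMark.one.weight = 0 := rfl
  match ℓ, s with
  | some κ, [] => simp [push]
  | some κ, [κ₀] => simpa [push, Letter.weight] using hmul κ κ₀
  | some κ, κ₀ :: κ₁ :: s =>
    have := hmul κ κ₀
    simp only [push, toWord_cons_cons, wordWeight_cons, Letter.weight]
    omega
  | none, [] => simp [push, Letter.weight, hone]
  | none, [κ₀] => simp [push, Letter.weight, hone]
  | none, κ₀ :: κ₁ :: s =>
    by_cases h : κ₀ = KleinMark.one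
    · simp only [push, h, if_true, toWord_cons_cons, wordWeight_cons, Letter.weight, hone]
      omega
    · simp [push, h, Letter.weight, hone]

def ofWord (w : List Letter) : NormalForm := w.foldr push [KleinMark.one]

lemma evalMarked_toWord_ofWord (w : List Letter) :
    evalMarked (ofWord w).toWord = evalMarked w := by
  induction w with
  | nil => rfl
  | cons ℓ w ih => rw [ofWord, List.foldr_cons, ← ofWord, evalMarked_toWord_push, ih]; rfl

lemma wordWeight_toWord_ofWord_le (w : List Letter) :
    wordWeight (ofWord w).toWord ≤ wordWeight w := by
  induction w with
  | nil => rfl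
  | cons ℓ w ih =>
    rw [ofWord, List.foldr_cons, ← ofWord, wordWeight_cons]
    exact (wordWeight_toWord_push_le ℓ _).trans (by omega)

end NormalForm

section Wreath

open Stream'

namespace Marked

/-- The marked pair with root permutation `a^ε` and sections `P` at `1` and `Q` at `0`. -/
def wreath (ε : Bool) (P Q : Marked) : Marked :=
  (Stream'.cons (!ε) '' P.1 ∪ Stream'.cons ε '' Q.1,
    fun ξ => xor ξ.head ε :: cond ξ.head (P.2 ξ.tail) (Q.2 ξ.tail))

lemma wreath_empty : wreath false (∅, id) (∅, id) = (∅, id) := by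
  refine Prod.ext (by simp [wreath]) (funext fun ξ => ?_)
  simp only [wreath, Bool.xor_false, id, Bool.cond_self, Stream'.eta]

lemma step_none_wreath (ε : Bool) (P Q : Marked) :
    (wreath ε P Q).step none = wreath (!ε) Q P := by
  refine Prod.ext ?_ (funext fun ξ => ?_)
  · simp only [step, wreath, Letter.isMark, cond_false, Bool.not_not]
    exact Set.union_comm _ _
  · obtain ⟨x, τ, rfl⟩ : ∃ (x : Bool) (τ : Boundary), ξ = x :: τ := ⟨_, _, (Stream'.eta ξ).symm⟩
    cases x <;> simp [step, wreath, Letter.act, aAct_cons]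

lemma step_some_wreath (κ : KleinMark) (ε : Bool) (P Q : Marked) :
    (wreath ε P Q).step (some κ) =
      wreath ε (P.step (some κ.sec1)) (cond κ.sec0IsA (Q.step none) Q) := by
  have hQ : (cond κ.sec0IsA (Q.step none) Q).1 = Q.1 := by cases κ.sec0IsA <;> rfl
  refine Prod.ext ?_ (funext fun ξ => ?_)
  · have hrho : (wreath ε P Q).2 rho = (!ε) :: P.2 rho := by
      conv_lhs => rw [rho_eq_cons]
      simp [wreath]
    have hnot : (!ε) :: P.2 rho ∉ Stream'.cons ε '' Q.1 := by
      rintro ⟨τ, -, h⟩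
      simpa using congrArg Stream'.head h
    show cond κ.2.2 (symmDiff (Stream'.cons (!ε) '' P.1 ∪ Stream'.cons ε '' Q.1)
        {(wreath ε P Q).2 rho}) (Stream'.cons (!ε) '' P.1 ∪ Stream'.cons ε '' Q.1) =
      Stream'.cons (!ε) '' (cond κ.2.2 (symmDiff P.1 {P.2 rho}) P.1) ∪
        Stream'.cons ε '' (cond κ.sec0IsA (Q.step none) Q).1
    rw [hQ, hrho]
    cases κ.2.2
    · rfl
    · rw [cond_true, cond_true, Set.image_symmDiff (cons_injective_right _), Set.image_singleton]
      ext η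
      by_cases hη : η = (!ε) :: P.2 rho
      · subst hη; simp [Set.mem_symmDiff, hnot]
      · simp [Set.mem_symmDiff, hη]
  · obtain ⟨x, τ, rfl⟩ : ∃ (x : Bool) (τ : Boundary), ξ = x :: τ := ⟨_, _, (Stream'.eta ξ).symm⟩
    cases x <;> cases h : κ.sec0IsA <;> simp [step, wreath, Letter.act, KleinMark.act_cons, h]

end Marked

end Wreath

/-- The root permutation and the words of the sections at `1` and `0` of a word. -/
def sections : List Letter → Bool × List Letter × List Letter
  | [] => (false, [], [])
  | none :: w =>
    let (ε, p, q) := sections w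
    (!ε, q, p)
  | some κ :: w =>
    let (ε, p, q) := sections w
    (ε, some κ.sec1 :: p, cond κ.sec0IsA (none :: q) q)

theorem evalMarked_eq_wreath (w : List Letter) :
    evalMarked w =
      Marked.wreath (sections w).1 (evalMarked (sections w).2.1) (evalMarked (sections w).2.2) := by
  induction w with
  | nil => exact Marked.wreath_empty.symm
  | cons ℓ w ih =>
    rcases ℓ with _ | κ
    · simp [sections, ih, Marked.step_none_wreath]
    · cases h : κ.sec0IsA <;> simp [sections, ih, Marked.step_some_wreath, h]

def KleinMark.secWeight (κ : KleinMark) : ℕ := κ.sec1.weight + cond κ.sec0IsA 70 0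

def Letter.secWeight : Letter → ℕ
  | none => 0
  | some κ => κ.secWeight

lemma wordWeight_sections (w : List Letter) :
    wordWeight (sections w).2.1 + wordWeight (sections w).2.2 = (w.map Letter.secWeight).sum := by
  induction w with
  | nil => rfl
  | cons ℓ w ih =>
    rcases ℓ with _ | κ
    · simp [sections, Letter.secWeight, ← ih, add_comm]
    · cases h : κ.sec0IsA <;>
        simp [sections, Letter.secWeight, KleinMark.secWeight, Letter.weight, h, ← ih] <;> ring

lemma KleinMark.seven_mul_secWeight_le (κ : KleinMark) : 7 * κ.secWeight ≤ 6 * κ.weight + 420 := by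
  revert κ
  decide

lemma NormalForm.seven_mul_wordWeight_sections_le (s : NormalForm) :
    7 * (wordWeight (sections s.toWord).2.1 + wordWeight (sections s.toWord).2.2) ≤
      6 * wordWeight s.toWord + 420 := by
  rw [wordWeight_sections]
  induction s with
  | nil => simp
  | cons κ s ih =>
    have hκ := κ.seven_mul_secWeight_le
    cases s with
    | nil => simpa [Letter.secWeight, Letter.weight] using hκ
    | cons κ' s =>
      simp only [NormalForm.toWord_cons_cons, List.map_cons, List.sum_cons, wordWeight_cons,
        Letter.secWeight, Letter.weight] at ih ⊢
      omega

def reachable (t : ℕ) : Set Marked :=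
  {P | ∃ s : NormalForm, wordWeight s.toWord ≤ t ∧ evalMarked s.toWord = P}

lemma evalMarked_mem_reachable {w : List Letter} {t : ℕ} (h : wordWeight w ≤ t) :
    evalMarked w ∈ reachable t :=
  ⟨_, (NormalForm.wordWeight_toWord_ofWord_le w).trans h, NormalForm.evalMarked_toWord_ofWord w⟩

lemma NormalForm.length_le_wordWeight (s : NormalForm) : s.length ≤ wordWeight s.toWord + 1 := by
  induction s with
  | nil => simp
  | cons κ s ih =>
    cases s with
    | nil => simp
    | cons κ' s =>
      simp only [toWord_cons_cons, wordWeight_cons, Letter.weight, List.length_cons] at ih ⊢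
      omega

lemma reachable_finite (t : ℕ) : (reachable t).Finite := by
  refine ((List.finite_length_le (α := KleinMark) (n := t + 1)).image
    (fun s : NormalForm => evalMarked s.toWord)).subset ?_
  rintro _ ⟨s, hs, rfl⟩
  exact ⟨s, (s.length_le_wordWeight).trans (by omega), rfl⟩

def numReachable (t : ℕ) : ℕ := (reachable t).ncard

def wreathImage (X Y : Set Marked) : Set Marked :=
  (fun z : Bool × Marked × Marked => Marked.wreath z.1 z.2.1 z.2.2) '' (Set.univ ×ˢ X ×ˢ Y)

lemma ncard_wreathImage_le {X Y : Set Marked} (hX : X.Finite) (hY : Y.Finite) :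
    (wreathImage X Y).ncard ≤ 2 * (X.ncard * Y.ncard) := by
  refine (Set.ncard_image_le (Set.finite_univ.prod (hX.prod hY))).trans_eq ?_
  rw [Set.ncard_prod, Set.ncard_prod, Set.ncard_univ, Nat.card_eq_fintype_card, Fintype.card_bool]

lemma reachable_subset_biUnion (t : ℕ) :
    reachable t ⊆ ⋃ j ∈ Finset.range ((6 * t + 420) / 7 + 1),
      wreathImage (reachable j) (reachable ((6 * t + 420) / 7 - j)) := by
  rintro _ ⟨s, hs, rfl⟩
  have hsec := s.seven_mul_wordWeight_sections_le
  set p := (sections s.toWord).2.1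
  set q := (sections s.toWord).2.2
  have hj : wordWeight p ≤ (6 * t + 420) / 7 := by omega
  simp only [Set.mem_iUnion, Finset.mem_range]
  refine ⟨wordWeight p, by omega, ⟨((sections s.toWord).1, evalMarked p, evalMarked q),
    ⟨Set.mem_univ _, evalMarked_mem_reachable le_rfl, evalMarked_mem_reachable (by omega)⟩,
    (evalMarked_eq_wreath _).symm⟩⟩

lemma numReachable_le_sum (t : ℕ) :
    numReachable t ≤ ∑ j ∈ Finset.range ((6 * t + 420) / 7 + 1),
      2 * (numReachable j * numReachable ((6 * t + 420) / 7 - j)) := by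
  refine (Set.ncard_le_ncard (reachable_subset_biUnion t) ?_).trans
    ((Finset.set_ncard_biUnion_le _ _).trans
      (Finset.sum_le_sum fun j _ => ncard_wreathImage_le (reachable_finite _) (reachable_finite _)))
  exact (Finset.finite_toSet _).biUnion fun j _ =>
    (Set.finite_univ.prod ((reachable_finite _).prod (reachable_finite _))).image _

lemma exists_letter_act_eq {x : Equiv.Perm (List Bool)} (hx : x ∈ Sset) :
    ∃ ℓ : Letter, ℓ.act = boundaryAct x ∧ ℓ.isMark = false ∧ ℓ.weight ≤ 90 := by
  rcases hx with rfl | rfl | rfl | rfl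
  · exact ⟨none, rfl, rfl, by decide⟩
  · exact ⟨some (true, false, false), rfl, rfl, by decide⟩
  · exact ⟨some (false, true, false), rfl, rfl, by decide⟩
  · exact ⟨some (true, true, false), funext bAct_cAct, rfl, by decide⟩

lemma exists_letterWord {l : List (Equiv.Perm (List Bool))} (hl : ∀ x ∈ l, x ∈ Sset) :
    ∃ v : List Letter, (∀ ℓ ∈ v, ℓ.isMark = false) ∧ wordWeight v ≤ 90 * l.length ∧
      v.length = l.length ∧ ∀ i, wordApplyB (l.drop i) = (evalMarked (v.drop i)).2 := by
  induction l with
  | nil => exact ⟨[], by simp, by simp, rfl, fun _ => by simp only [List.drop_nil]; rfl⟩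
  | cons x l ih =>
    obtain ⟨ℓ, hact, hmark, hweight⟩ := exists_letter_act_eq (hl x List.mem_cons_self)
    obtain ⟨v, hvmark, hvweight, hvlen, hv⟩ := ih fun y hy => hl y (List.mem_cons_of_mem x hy)
    refine ⟨ℓ :: v, ?_, ?_, by simp [hvlen], ?_⟩
    · simpa [hmark] using hvmark
    · simp only [wordWeight_cons, List.length_cons]
      omega
    · rintro (_ | i)
      · funext ξ
        show wordApplyB l (boundaryAct x ξ) = (evalMarked v).2 (ℓ.act ξ)
        rw [hact]
        exact congrFun (hv 0) _
      · exact hv i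

def orbitPoints (v : List Letter) : Set Boundary := {ξ | ∃ i, ξ = (evalMarked (v.drop i)).2 rho}

lemma orbitPoints_nil : orbitPoints [] = {rho} := by
  simp [orbitPoints]

lemma orbitPoints_cons (ℓ : Letter) (v : List Letter) :
    orbitPoints (ℓ :: v) = insert ((evalMarked (ℓ :: v)).2 rho) (orbitPoints v) := by
  ext ξ
  constructor
  · rintro ⟨_ | i, rfl⟩
    exacts [Or.inl rfl, Or.inr ⟨i, rfl⟩]
  · rintro (rfl | ⟨i, rfl⟩)
    exacts [⟨0, rfl⟩, ⟨i + 1, rfl⟩]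

lemma orbitPoints_finite (v : List Letter) : (orbitPoints v).Finite := by
  refine ((Set.finite_Iic v.length).image fun i => (evalMarked (v.drop i)).2 rho).subset ?_
  rintro _ ⟨i, rfl⟩
  refine ⟨min i v.length, Set.mem_Iic.2 (min_le_right _ _), ?_⟩
  rcases le_total i v.length with h | h <;> simp [h, List.drop_eq_nil_of_le]

open Classical in
/-- Inserts a marker before `ℓ :: v` when `ρ·(ℓ :: v)` lies in `T` but not in the inverted orbit
of `v`, so that every point of `T` in the inverted orbit is marked exactly once. -/
def markWord (T : Set Boundary) : List Letter → List Letter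
  | [] => if rho ∈ T then [Letter.mark] else []
  | ℓ :: v =>
    if (evalMarked (ℓ :: v)).2 rho ∈ T \ orbitPoints v then Letter.mark :: ℓ :: markWord T v
    else ℓ :: markWord T v

lemma evalMarked_mark_cons (w : List Letter) :
    evalMarked (Letter.mark :: w) =
      (symmDiff (evalMarked w).1 {(evalMarked w).2 rho}, (evalMarked w).2) := rfl

lemma evalMarked_markWord (T : Set Boundary) {v : List Letter} (hv : ∀ ℓ ∈ v, ℓ.isMark = false) :
    (evalMarked (markWord T v)).1 = T ∩ orbitPoints v ∧
      (evalMarked (markWord T v)).2 = (evalMarked v).2 := by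
  induction v with
  | nil =>
    rw [orbitPoints_nil, markWord]
    split_ifs with h
    · rw [evalMarked_mark_cons]
      simp [h]
    · simp [h]
  | cons ℓ v ih =>
    obtain ⟨ih₁, ih₂⟩ := ih fun ℓ' h => hv ℓ' (List.mem_cons_of_mem ℓ h)
    have hℓ : ℓ.isMark = false := hv ℓ List.mem_cons_self
    have hfst : (evalMarked (ℓ :: markWord T v)).1 = T ∩ orbitPoints v := by
      simp [Marked.step, hℓ, ih₁]
    have hsnd : (evalMarked (ℓ :: markWord T v)).2 = (evalMarked (ℓ :: v)).2 := by
      simp [Marked.step, ih₂]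
    rw [orbitPoints_cons, markWord]
    split_ifs with h
    · rw [evalMarked_mark_cons, hfst, hsnd, Set.inter_insert_of_mem h.1,
        Disjoint.symmDiff_eq_sup (Set.disjoint_singleton_right.2 fun h' => h.2 h'.2)]
      exact ⟨Set.union_singleton, rfl⟩
    · refine ⟨hfst.trans ?_, hsnd⟩
      by_cases hT : (evalMarked (ℓ :: v)).2 rho ∈ T
      · rw [Set.insert_eq_of_mem (not_not.1 fun h' => h ⟨hT, h'⟩)]
      · rw [Set.inter_insert_of_notMem hT]

lemma wordWeight_markWord_le (T : Set Boundary) (v : List Letter) :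
    wordWeight (markWord T v) ≤ wordWeight v + v.length + 1 := by
  have hmark : Letter.mark.weight = 1 := rfl
  induction v with
  | nil => unfold markWord; split_ifs <;> simp [hmark]
  | cons ℓ v ih =>
    unfold markWord
    split_ifs <;> simp only [wordWeight_cons, List.length_cons, hmark] <;> omega

lemma mem_image_fst_reachable {T : Set Boundary} {v : List Letter}
    (hv : ∀ ℓ ∈ v, ℓ.isMark = false) (hT : T ⊆ orbitPoints v) {t : ℕ}
    (ht : wordWeight v + v.length + 1 ≤ t) : T ∈ Prod.fst '' reachable t :=
  ⟨_, evalMarked_mem_reachable ((wordWeight_markWord_le T v).trans ht),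
    by rw [(evalMarked_markWord T hv).1, Set.inter_eq_left.2 hT]⟩

def orbitSubsets (m : ℕ) : Set (Set Boundary) :=
  {T | ∃ l : List (Equiv.Perm (List Bool)), (∀ x ∈ l, x ∈ Sset) ∧ l.length ≤ m ∧
    T ⊆ invOrbitB l rhoInf}

lemma exists_orbitPoints_eq {l : List (Equiv.Perm (List Bool))} (hl : ∀ x ∈ l, x ∈ Sset) :
    ∃ v : List Letter, (∀ ℓ ∈ v, ℓ.isMark = false) ∧ wordWeight v ≤ 90 * l.length ∧
      v.length = l.length ∧ invOrbitB l rhoInf = orbitPoints v := by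
  obtain ⟨v, hmark, hweight, hlen, hv⟩ := exists_letterWord hl
  refine ⟨v, hmark, hweight, hlen, Set.ext fun ξ => ?_⟩
  simp only [invOrbitB, orbitPoints, hv]
  rfl

lemma orbitSubsets_subset (m : ℕ) : orbitSubsets m ⊆ Prod.fst '' reachable (91 * m + 1) := by
  rintro T ⟨l, hl, hlen, hT⟩
  obtain ⟨v, hmark, hweight, hvlen, hv⟩ := exists_orbitPoints_eq hl
  exact mem_image_fst_reachable hmark (hv ▸ hT) (by omega)

lemma orbitSubsets_finite (m : ℕ) : (orbitSubsets m).Finite :=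
  ((reachable_finite _).image _).subset (orbitSubsets_subset m)

lemma ncard_orbitSubsets_le (m : ℕ) : (orbitSubsets m).ncard ≤ numReachable (91 * m + 1) :=
  (Set.ncard_le_ncard (orbitSubsets_subset m) ((reachable_finite _).image _)).trans
    (Set.ncard_image_le (reachable_finite _))

lemma NorbB_le (m : ℕ) : NorbB m ≤ numReachable (91 * m + 1) := by
  refine le_trans ?_ (ncard_orbitSubsets_le m)
  rw [NorbB, Nat.card_coe_set_eq]
  refine Set.ncard_le_ncard ?_ (orbitSubsets_finite m)
  rintro _ ⟨l, hl, hlen, rfl⟩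
  exact ⟨l, hl, hlen, subset_rfl⟩

lemma two_pow_card_invOrbitB_le {m : ℕ} {l : List (Equiv.Perm (List Bool))}
    (hl : ∀ x ∈ l, x ∈ Sset) (hlen : l.length ≤ m) :
    2 ^ Nat.card (invOrbitB l rhoInf) ≤ numReachable (91 * m + 1) := by
  obtain ⟨v, -, -, -, hv⟩ := exists_orbitPoints_eq hl
  rw [Nat.card_coe_set_eq, ← Set.ncard_powerset _ (hv ▸ orbitPoints_finite v)]
  exact (Set.ncard_le_ncard (t := orbitSubsets m) (fun T hT => ⟨l, hl, hlen, hT⟩)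
    (orbitSubsets_finite m)).trans (ncard_orbitSubsets_le m)

lemma two_pow_DeltaB_le (m : ℕ) : 2 ^ DeltaB m ≤ numReachable (91 * m + 1) := by
  have hpos : numReachable (91 * m + 1) ≠ 0 :=
    Nat.pos_iff_ne_zero.1 (Nat.one_le_two_pow.trans (two_pow_card_invOrbitB_le (l := [])
      (by simp) (Nat.zero_le m)))
  refine le_trans (Nat.pow_le_pow_right two_pos ?_) (Nat.pow_log_le_self 2 hpos)
  refine csSup_le' ?_
  rintro _ ⟨l, hl, hlen, rfl⟩
  exact Nat.le_log_of_pow_le one_lt_two (two_pow_card_invOrbitB_le hl hlen)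

end Grig

/-- **Bartholdi–Erschler bounds** on the inverted orbit growth of the Grigorchuk group
acting on the orbit of `ρ = 1^∞`: there are constants `C > 0` and `0 < α < 1` such that
`Δ_ρ^S(m) ≤ C m^α` and `N_ρ^S(m) ≤ exp(C m^α)` for every `m ≥ 1`. -/
theorem bartholdi_erschler_inverted_orbits :
    ∃ C : ℝ, 0 < C ∧ ∃ α : ℝ, 0 < α ∧ α < 1 ∧ ∀ m : ℕ, 1 ≤ m →
      (DeltaB m : ℝ) ≤ C * (m : ℝ) ^ α ∧
      (NorbB m : ℝ) ≤ Real.exp (C * (m : ℝ) ^ α) := by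
  obtain ⟨C, hC, hM⟩ := exists_le_exp_rpow_of_le_sum _ Grig.numReachable_le_sum
  refine ⟨2 * (93 * C), by positivity, 9 / 10, by norm_num, by norm_num, fun m hm => ?_⟩
  have hreach : (Grig.numReachable (91 * m + 1) : ℝ) ≤ Real.exp (93 * C * (m : ℝ) ^ (9 / 10 : ℝ)) :=
    (hM _).trans (Real.exp_le_exp.2 (by nlinarith [cast_add_one_rpow_le hm]))
  have hpos : 0 ≤ 93 * C * (m : ℝ) ^ (9 / 10 : ℝ) := by positivity
  constructor
  · refine (le_two_mul_of_two_pow_le_exp (le_trans ?_ hreach)).trans_eq (by ring)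
    exact_mod_cast Grig.two_pow_DeltaB_le m
  · refine le_trans ?_ (hreach.trans (Real.exp_le_exp.2 (by linarith)))
    exact_mod_cast Grig.NorbB_le m
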